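/- Let F(u) = ∫₀^{u} exp(t²) dt, f(u) = 1 − 2·u·exp(−u²)·F(u), and let u₀ be the unique zero of f in (0, ∞). Then f'(u) < 0 for all u with 0 < u ≤ u₀; in particular f is strictly decreasing on [0, u₀] and has no local extremum in (0, u₀). Consequently, for ĉ₁ > 0 and q > 0 the function κ(y) = (1/ĉ₁)·f(q·y) is strictly decreasing on [0, u₀/q]. -/

import Mathlib

open Real MeasureTheory intervalIntegral Set

/-- `F(u) = ∫₀^u exp(t²) dt`. -/
noncomputable def Ferf (u : ℝ) : ℝ := ∫ t in (0:ℝ)..u, Real.exp (t ^ 2)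

/-- `f(u) = 1 - 2 u exp(-u²) F(u)`, the rescaled curvature function. -/
noncomputable def fker (u : ℝ) : ℝ := 1 - 2 * u * Real.exp (-(u ^ 2)) * Ferf u

/-!
Differentiating gives the linear ODE `u f'(u) = (1 - 2u²) f(u) - 1`, i.e.
`u f'(u) = -(2u² f(u) + (1 - f(u)))`. For `u > 0` the term `1 - f(u) = 2u e^{-u²} F(u)` is
positive, so `f'(u) < 0` wherever `f(u) ≥ 0`. Since `f(0) = 1` and `f` has no zero in `(0, u₀)`,
the intermediate value theorem gives `f ≥ 0` on `[0, u₀]`, hence `f' < 0` on `(0, u₀]`.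
-/

lemma continuous_exp_sq : Continuous fun t : ℝ => exp (t ^ 2) := by
  fun_prop

lemma hasDerivAt_Ferf (u : ℝ) : HasDerivAt Ferf (exp (u ^ 2)) u :=
  integral_hasDerivAt_right (continuous_exp_sq.intervalIntegrable _ _)
    (continuous_exp_sq.stronglyMeasurableAtFilter _ _) continuous_exp_sq.continuousAt

lemma Ferf_pos {u : ℝ} (hu : 0 < u) : 0 < Ferf u :=
  intervalIntegral_pos_of_pos (continuous_exp_sq.intervalIntegrable _ _)
    (fun _ => exp_pos _) hu

lemma fker_zero : fker 0 = 1 := by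
  simp [fker]

lemma fker_lt_one {u : ℝ} (hu : 0 < u) : fker u < 1 := by
  have : 0 < 2 * u * exp (-(u ^ 2)) * Ferf u := mul_pos (by positivity) (Ferf_pos hu)
  rw [fker]
  linarith

lemma hasDerivAt_fker (u : ℝ) :
    HasDerivAt fker (2 * exp (-(u ^ 2)) * (2 * u ^ 2 - 1) * Ferf u - 2 * u) u := by
  have hexp : HasDerivAt (fun x : ℝ => exp (-(x ^ 2))) (exp (-(u ^ 2)) * (-(2 * u))) u := by
    simpa using ((hasDerivAt_pow 2 u).fun_neg).exp
  have hprod : HasDerivAt fker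
      (-((2 * 1 * exp (-(u ^ 2)) + 2 * u * (exp (-(u ^ 2)) * (-(2 * u)))) * Ferf u
        + 2 * u * exp (-(u ^ 2)) * exp (u ^ 2))) u :=
    ((((hasDerivAt_id' u).const_mul 2).fun_mul hexp).fun_mul (hasDerivAt_Ferf u)).const_sub 1
  refine hprod.congr_deriv ?_
  have hinv : exp (-(u ^ 2)) * exp (u ^ 2) = 1 := by rw [← exp_add]; simp
  linear_combination (-(2 * u)) * hinv

lemma continuous_fker : Continuous fker :=
  continuous_iff_continuousAt.mpr fun u => (hasDerivAt_fker u).continuousAt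

lemma mul_deriv_fker (u : ℝ) : u * deriv fker u = (1 - 2 * u ^ 2) * fker u - 1 := by
  rw [(hasDerivAt_fker u).deriv, fker]
  ring

lemma deriv_fker_neg {u : ℝ} (hu : 0 < u) (hf : 0 ≤ fker u) : deriv fker u < 0 := by
  have hlt := fker_lt_one hu
  have hmul : u * deriv fker u < 0 := by
    rw [mul_deriv_fker]
    nlinarith [mul_nonneg (sq_nonneg u) hf]
  exact neg_of_mul_neg_right hmul hu.le

lemma fker_nonneg_of_forall_ne_zero {u : ℝ} (hu : 0 ≤ u)
    (hzero : ∀ c ∈ Ioo 0 u, fker c ≠ 0) : 0 ≤ fker u := by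
  by_contra! hneg
  have hmem : (0 : ℝ) ∈ Ioo (fker u) (fker 0) := ⟨hneg, by rw [fker_zero]; exact one_pos⟩
  obtain ⟨c, hc, hfc⟩ := intermediate_value_Ioo' hu continuous_fker.continuousOn hmem
  exact hzero c hc hfc

lemma StrictAntiOn.const_mul_comp_mul_Icc {f : ℝ → ℝ} {a c q : ℝ}
    (hf : StrictAntiOn f (Icc 0 a)) (hc : 0 < c) (hq : 0 < q) :
    StrictAntiOn (fun y => c * f (q * y)) (Icc 0 (a / q)) := by
  have hmaps : MapsTo (q * ·) (Icc 0 (a / q)) (Icc 0 a) := fun y ⟨hy0, hya⟩ =>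
    ⟨by positivity, by rwa [le_div_iff₀' hq] at hya⟩
  exact (strictMono_mul_left_of_pos hc).strictMonoOn _ |>.comp_strictAntiOn
    (hf.comp_strictMonoOn ((strictMono_mul_left_of_pos hq).strictMonoOn _) hmaps) (mapsTo_univ _ _)

theorem fker_strictly_decreasing_up_to_zero_general
    (u₀ : ℝ)
    (huniq : ∀ u : ℝ, 0 < u → fker u = 0 → u = u₀) :
    (∀ u : ℝ, 0 < u → u ≤ u₀ → deriv fker u < 0) ∧
    StrictAntiOn fker (Set.Icc 0 u₀) ∧
    ∀ c1 q : ℝ, 0 < c1 → 0 < q →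
      StrictAntiOn (fun y : ℝ => (1 / c1) * fker (q * y)) (Set.Icc 0 (u₀ / q)) := by
  have hderiv : ∀ u : ℝ, 0 < u → u ≤ u₀ → deriv fker u < 0 := fun u hu hle =>
    deriv_fker_neg hu <| fker_nonneg_of_forall_ne_zero hu.le fun c hc hfc =>
      (huniq c hc.1 hfc ▸ hc.2).not_ge hle
  have hanti : StrictAntiOn fker (Icc 0 u₀) := by
    refine strictAntiOn_of_deriv_neg (convex_Icc 0 u₀) continuous_fker.continuousOn fun x hx => ?_
    rw [interior_Icc] at hx
    exact hderiv x hx.1 hx.2.le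
  exact ⟨hderiv, hanti, fun c1 q hc1 hq => hanti.const_mul_comp_mul_Icc (by positivity) hq⟩

/-- on `(0, u₀]` (where `u₀` is the unique positive zero of `f`)
one has `f' < 0`; in particular `f` is strictly decreasing on `[0, u₀]` (so it has
no local extremum in `(0, u₀)`), and consequently `κ(y) = (1/ĉ₁) f(q y)` is
strictly decreasing on `[0, u₀/q]`. -/
theorem fker_strictly_decreasing_up_to_zero
    (u₀ : ℝ) (hu₀ : 0 < u₀) (hfu₀ : fker u₀ = 0)
    (huniq : ∀ u : ℝ, 0 < u → fker u = 0 → u = u₀) :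
    (∀ u : ℝ, 0 < u → u ≤ u₀ → deriv fker u < 0) ∧
    StrictAntiOn fker (Set.Icc 0 u₀) ∧
    ∀ c1 q : ℝ, 0 < c1 → 0 < q →
      StrictAntiOn (fun y : ℝ => (1 / c1) * fker (q * y)) (Set.Icc 0 (u₀ / q)) :=
  fker_strictly_decreasing_up_to_zero_general u₀ huniq
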